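/- arXiv:1603.02884 — 3 statements merged into one kernel-verified Lean document; each statement's English description precedes it below -/
import Mathlib

section
/- Let A ⊆ B be discrete valuation rings with uniformisers π_A and π_B respectively, and suppose that π_A = u·π_B^f in B for some unit u of B and some integer f ≥ 1 (i.e., f is the ramification index of the extension). Let n ≥ 1 and e_A ≥ 1 be integers and set e_B = f·e_A. Then the inclusion A ↪ B induces a well-defined injective ring homomorphism A/(π_A^{e_A(n−1)+1}) → B/(π_B^{e_B(n−1)+1}). -/
/-! Write a nonzero `x : A` as `w * πA ^ t` with `w` a unit. Its image in `B` is then a unit times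
`πB ^ (f * t)`, so `πB ^ m` divides it exactly when `m ≤ f * t`. For `f * k < m ≤ f * (k + 1)` this
says `k + 1 ≤ t`, i.e. `πA ^ (k + 1) ∣ x`: the ideal `(πB ^ m)` pulls back to `(πA ^ (k + 1))`,
which makes the induced map of quotients well defined and injective. -/

section

variable {A B : Type*} [CommRing A] [CommRing B] [Algebra A B] {πA : A} {πB u : B} {f : ℕ}

lemma exists_isUnit_algebraMap_eq_mul_pow (hu : IsUnit u)
    (hram : algebraMap A B πA = u * πB ^ f) (w : Aˣ) (t : ℕ) :
    ∃ v : B, IsUnit v ∧ algebraMap A B (w * πA ^ t) = v * πB ^ (f * t) :=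
  ⟨algebraMap A B w * u ^ t, (w.isUnit.map _).mul (hu.pow t), by
    rw [map_mul, map_pow, hram, mul_pow, ← pow_mul, mul_assoc]⟩

namespace IsDiscreteValuationRing

variable [IsDomain A] [IsDiscreteValuationRing A] [IsDomain B]

lemma pow_dvd_algebraMap_iff (hπA : Irreducible πA) (hπB : Irreducible πB) (hu : IsUnit u)
    (hram : algebraMap A B πA = u * πB ^ f) {k m : ℕ} (hlt : f * k < m) (hle : m ≤ f * (k + 1))
    (x : A) : πB ^ m ∣ algebraMap A B x ↔ πA ^ (k + 1) ∣ x := by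
  rcases eq_or_ne x 0 with rfl | hx
  · simp
  obtain ⟨t, w, rfl⟩ := eq_unit_mul_pow_irreducible hx hπA
  obtain ⟨v, hv, hxB⟩ := exists_isUnit_algebraMap_eq_mul_pow hu hram w t
  rw [hxB, hv.dvd_mul_left, Units.dvd_mul_left, pow_dvd_pow_iff hπB.ne_zero hπB.not_isUnit,
    pow_dvd_pow_iff hπA.ne_zero hπA.not_isUnit]
  constructor
  · intro h
    by_contra! ht
    exact absurd (hlt.trans_le h) (Nat.mul_le_mul_left f (Nat.lt_succ_iff.mp ht)).not_gt
  · exact fun ht => hle.trans (Nat.mul_le_mul_left f ht)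

lemma comap_span_pow_eq_span_pow (hπA : Irreducible πA) (hπB : Irreducible πB) (hu : IsUnit u)
    (hram : algebraMap A B πA = u * πB ^ f) {k m : ℕ} (hlt : f * k < m) (hle : m ≤ f * (k + 1)) :
    (Ideal.span {πB ^ m}).comap (algebraMap A B) = Ideal.span {πA ^ (k + 1)} := by
  ext x
  rw [Ideal.mem_comap, Ideal.mem_span_singleton, Ideal.mem_span_singleton,
    pow_dvd_algebraMap_iff hπA hπB hu hram hlt hle]

end IsDiscreteValuationRing

end

theorem stmt_1_general (A B : Type*) [CommRing A] [IsDomain A] [IsDiscreteValuationRing A]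
    [CommRing B] [IsDomain B]
    [Algebra A B]
    (πA : A) (hπA : Irreducible πA) (πB : B) (hπB : Irreducible πB)
    (f : ℕ) (hf : 1 ≤ f) (u : B) (hu : IsUnit u)
    (hram : algebraMap A B πA = u * πB ^ f)
    (n eA eB : ℕ) (heB : eB = f * eA) :
    ∃ g : A ⧸ Ideal.span {πA ^ (eA * (n - 1) + 1)} →+*
          B ⧸ Ideal.span {πB ^ (eB * (n - 1) + 1)},
      Function.Injective g ∧
      ∀ x : A, g (Ideal.Quotient.mk _ x) = Ideal.Quotient.mk _ (algebraMap A B x) := by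
  subst heB
  have hcomap := IsDiscreteValuationRing.comap_span_pow_eq_span_pow hπA hπB hu hram
    (k := eA * (n - 1)) (m := f * eA * (n - 1) + 1) (by rw [mul_assoc]; omega)
    (by rw [mul_add, mul_one, mul_assoc]; omega)
  exact ⟨Ideal.quotientMap _ _ hcomap.ge, Ideal.quotientMap_injective' hcomap.le,
    fun _ => Ideal.quotientMap_mk⟩

/-- Let `A ⊆ B` be discrete valuation rings with uniformisers `πA`, `πB`,
and `πA = u·πB^f` with `u` a unit of `B` and `f ≥ 1` (the ramification index). Let
`n ≥ 1`, `eA ≥ 1` and `eB = f·eA`. Then the inclusion `A ↪ B` induces a well-defined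
injective ring homomorphism `A/(πA^{eA(n−1)+1}) → B/(πB^{eB(n−1)+1})`. -/
theorem stmt_1 (A B : Type*) [CommRing A] [IsDomain A] [IsDiscreteValuationRing A]
    [CommRing B] [IsDomain B] [IsDiscreteValuationRing B]
    [Algebra A B] (hinj : Function.Injective (algebraMap A B))
    (πA : A) (hπA : Irreducible πA) (πB : B) (hπB : Irreducible πB)
    (f : ℕ) (hf : 1 ≤ f) (u : B) (hu : IsUnit u)
    (hram : algebraMap A B πA = u * πB ^ f)
    (n eA eB : ℕ) (hn : 1 ≤ n) (heA : 1 ≤ eA) (heB : eB = f * eA) :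
    ∃ g : A ⧸ Ideal.span {πA ^ (eA * (n - 1) + 1)} →+*
          B ⧸ Ideal.span {πB ^ (eB * (n - 1) + 1)},
      Function.Injective g ∧
      ∀ x : A, g (Ideal.Quotient.mk _ x) = Ideal.Quotient.mk _ (algebraMap A B x) :=
  stmt_1_general A B πA hπA πB hπB f hf u hu hram n eA eB heB
end

section
/- Let O be a discrete valuation ring with uniformiser π, let R be a commutative O-algebra, let S be an O-submodule of the formal power series ring O[[q]], and define the saturation D := { f ∈ O[[q]] : there exists an integer t ≥ 0 such that π^t·f ∈ S }. Then the natural R-linear map D ⊗_O R → R[[q]], induced by applying the coefficient-wise base change map O[[q]] → R[[q]] on the first factor, is injective. Consequently, D ⊗_O R is isomorphic as an R-module to the R-submodule of R[[q]] generated by the image of D under the map O[[q]] → R[[q]]. -/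
/-!
Since `D` is `π`-saturated, every finitely generated `N ≤ D` lies in the span of finitely many
`fᵢ ∈ D` whose coefficients have an invertible `n × n` minor. Start from a basis of `N` (free, as
`O` is a PID), which has a nonzero minor; while the rows are dependent modulo `π`, a combination of
them is divisible by `π`, and replacing a row by the quotient (still in `D`) removes a factor `π`
from the minor without shrinking the span. An invertible minor survives base change, so the images
of the `fᵢ` stay linearly independent in `R⟦X⟧`, while every element of `R ⊗ D` is an
`R`-combination of the `1 ⊗ fᵢ`.
-/

open TensorProduct

theorem Matrix.exists_det_ne_zero_of_linearIndependent {A ι : Type*} [CommRing A] [IsDomain A] :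
    ∀ {n : ℕ} (F : Fin n → ι → A), LinearIndependent A F →
      ∃ k : Fin n → ι, (Matrix.of fun i j => F i (k j)).det ≠ 0
  | 0, _, _ => ⟨Fin.elim0, by simp⟩
  | n + 1, F, hF => by
    obtain ⟨k, hk⟩ := exists_det_ne_zero_of_linearIndependent (fun i => F i.castSucc)
      (hF.comp Fin.castSucc (Fin.castSucc_injective n))
    by_contra! hc
    -- Expanding the vanishing minors along their last column `c` gives a relation among the
    -- rows whose coefficients are cofactors; the one of the last row is the minor `hk`.
    set e : Fin (n + 1) → A := fun i =>
      (-1) ^ ((i : ℕ) + n) * (Matrix.of fun i' j' => F (i.succAbove i') (k j')).det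
    have hrel : ∑ i, e i • F i = 0 := by
      funext c
      have h0 := hc (Fin.snoc k c)
      rw [Matrix.det_succ_column _ (Fin.last n)] at h0
      simp only [Finset.sum_apply, Pi.smul_apply, smul_eq_mul, Pi.zero_apply, ← h0]
      refine Finset.sum_congr rfl fun i _ => ?_
      simp [e, Matrix.submatrix, Fin.snoc_castSucc]
      ring
    have := Fintype.linearIndependent_iff.mp hF e hrel (Fin.last n)
    simp [e, hk] at this

theorem Matrix.det_updateRow_of_smul_eq_sum {A ι : Type*} [CommRing A] [Fintype ι]
    [DecidableEq ι] (M : Matrix ι ι A) (j : ι) {a : A} {c w : ι → A}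
    (hw : a • w = ∑ i, c i • M i) :
    a * (M.updateRow j w).det = c j * M.det := by
  rw [← Matrix.det_updateRow_smul, hw, Matrix.det_updateRow_sum, smul_eq_mul]

theorem Submodule.span_range_le_span_range_update {R M ι : Type*} [CommRing R] [AddCommGroup M]
    [Module R M] [Fintype ι] [DecidableEq ι] {f : ι → M} {c : ι → R} {j : ι} (hj : IsUnit (c j))
    {a : R} {h : M} (hh : a • h = ∑ i, c i • f i) :
    span R (Set.range f) ≤ span R (Set.range (Function.update f j h)) := by
  set P := span R (Set.range (Function.update f j h))
  have hmem : ∀ i, Function.update f j h i ∈ P := fun i => subset_span ⟨i, rfl⟩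
  have hdiff : ∑ i, c i • f i - ∑ i, c i • Function.update f j h i = c j • (f j - h) := by
    rw [← Finset.sum_sub_distrib, Finset.sum_eq_single j (fun i _ hi => by simp [hi]) (by simp)]
    simp [smul_sub]
  rw [span_le]
  rintro _ ⟨i, rfl⟩
  rcases eq_or_ne i j with rfl | hij
  · rw [SetLike.mem_coe, ← smul_mem_iff_of_isUnit P hj]
    have hfi : c i • f i = a • h - ∑ l, c l • Function.update f i h l + c i • h := by
      rw [hh, hdiff]; module
    have hh' : h ∈ P := by simpa using hmem i
    rw [hfi]
    exact add_mem (sub_mem (smul_mem _ _ hh') (sum_mem fun l _ => smul_mem _ _ (hmem l)))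
      (smul_mem _ _ hh')
  · simpa [hij] using hmem i

namespace PowerSeries

open Submodule

section CommRing

variable {A : Type*} [CommRing A] {n : ℕ}

noncomputable def coeffMatrix (f : Fin n → A⟦X⟧) (k : Fin n → ℕ) : Matrix (Fin n) (Fin n) A :=
  Matrix.of fun i j => coeff (k j) (f i)

theorem coeffMatrix_map {B : Type*} [CommRing B] (φ : A →+* B) (f : Fin n → A⟦X⟧)
    (k : Fin n → ℕ) : coeffMatrix (fun i => map φ (f i)) k = (coeffMatrix f k).map φ := by
  ext; simp [coeffMatrix]

theorem coeffMatrix_update (f : Fin n → A⟦X⟧) (k : Fin n → ℕ) (j : Fin n) (h : A⟦X⟧) :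
    coeffMatrix (Function.update f j h) k =
      (coeffMatrix f k).updateRow j fun l => coeff (k l) h := by
  ext i l
  rcases eq_or_ne i j with rfl | hij <;> simp [coeffMatrix, *]

theorem linearIndependent_of_isUnit_det_coeffMatrix {f : Fin n → A⟦X⟧} {k : Fin n → ℕ}
    (h : IsUnit (coeffMatrix f k).det) : LinearIndependent A f :=
  LinearIndependent.of_comp (LinearMap.pi fun j => coeff (k j))
    (Matrix.linearIndependent_rows_of_isUnit ((Matrix.isUnit_iff_isUnit_det _).mpr h))

theorem exists_smul_eq_of_forall_dvd_coeff {x : A} {F : A⟦X⟧} (h : ∀ m, x ∣ coeff m F) :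
    ∃ G : A⟦X⟧, x • G = F := by
  choose b hb using h
  exact ⟨mk b, by ext m; simp [hb]⟩

theorem exists_isUnit_det_coeffMatrix_of_linearIndependent_residue [IsLocalRing A]
    {f : Fin n → A⟦X⟧}
    (hf : LinearIndependent (IsLocalRing.ResidueField A)
      fun i m => IsLocalRing.residue A (coeff m (f i))) :
    ∃ k, IsUnit (coeffMatrix f k).det := by
  obtain ⟨k, hk⟩ := Matrix.exists_det_ne_zero_of_linearIndependent _ hf
  refine ⟨k, (IsLocalRing.residue_ne_zero_iff_isUnit _).mp ?_⟩
  rwa [RingHom.map_det]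

end CommRing

section DiscreteValuationRing

variable {O : Type*} [CommRing O] [IsDomain O] [IsDiscreteValuationRing O] {π : O} {n : ℕ}
  {D : Submodule O O⟦X⟧}

theorem exists_smul_eq_sum_of_not_linearIndependent_residue (hπ : Irreducible π)
    {f : Fin n → O⟦X⟧}
    (hf : ¬ LinearIndependent (IsLocalRing.ResidueField O)
      fun i m => IsLocalRing.residue O (coeff m (f i))) :
    ∃ (c : Fin n → O) (j : Fin n) (h : O⟦X⟧), IsUnit (c j) ∧ π • h = ∑ i, c i • f i := by
  obtain ⟨c', hc', j, hj⟩ := Fintype.not_linearIndependent_iff.mp hf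
  choose c hc using fun i => IsLocalRing.residue_surjective (c' i)
  obtain ⟨h, hh⟩ : ∃ h : O⟦X⟧, π • h = ∑ i, c i • f i := by
    refine exists_smul_eq_of_forall_dvd_coeff fun m => ?_
    rw [← Ideal.mem_span_singleton, ← hπ.maximalIdeal_eq, ← IsLocalRing.residue_eq_zero_iff]
    simpa [map_sum, hc] using congrFun hc' m
  exact ⟨c, j, h, (IsLocalRing.residue_ne_zero_iff_isUnit _).mp (by rwa [hc]), hh⟩

theorem exists_isUnit_det_coeffMatrix_of_not_dvd (hπ : Irreducible π)
    (hD : ∀ f, π • f ∈ D → f ∈ D) (t : ℕ) :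
    ∀ {f : Fin n → O⟦X⟧} {k : Fin n → ℕ}, (∀ i, f i ∈ D) → ¬ π ^ t ∣ (coeffMatrix f k).det →
      ∃ (f' : Fin n → O⟦X⟧) (k' : Fin n → ℕ), (∀ i, f' i ∈ D) ∧
        span O (Set.range f) ≤ span O (Set.range f') ∧ IsUnit (coeffMatrix f' k').det := by
  induction t with
  | zero => intro _ _ _ hdvd; simp at hdvd
  | succ t ih =>
    intro f k hfD hdvd
    by_cases hres : LinearIndependent (IsLocalRing.ResidueField O)
        fun i m => IsLocalRing.residue O (coeff m (f i))
    · obtain ⟨k', hk'⟩ := exists_isUnit_det_coeffMatrix_of_linearIndependent_residue hres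
      exact ⟨f, k', hfD, le_rfl, hk'⟩
    obtain ⟨c, j, h, hcj, hh⟩ := exists_smul_eq_sum_of_not_linearIndependent_residue hπ hres
    have hhD : h ∈ D := hD h (hh ▸ sum_mem fun i _ => D.smul_mem _ (hfD i))
    have hupdD : ∀ i, Function.update f j h i ∈ D :=
      (Function.forall_update_iff f fun _ g => g ∈ D).mpr ⟨hhD, fun i _ => hfD i⟩
    have hdet : π * (coeffMatrix (Function.update f j h) k).det = c j * (coeffMatrix f k).det := by
      rw [coeffMatrix_update]
      refine Matrix.det_updateRow_of_smul_eq_sum _ _ (funext fun l => ?_)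
      simpa [coeffMatrix, map_sum] using congrArg (coeff (k l)) hh
    have hdvd' : ¬ π ^ t ∣ (coeffMatrix (Function.update f j h) k).det := fun hdvd' =>
      hdvd (by rw [pow_succ', ← hcj.dvd_mul_left, ← hdet]; exact mul_dvd_mul_left π hdvd')
    obtain ⟨f', k', hf'D, hspan, hk'⟩ := ih hupdD hdvd'
    exact ⟨f', k', hf'D, (span_range_le_span_range_update hcj hh).trans hspan, hk'⟩

theorem exists_isUnit_det_coeffMatrix_of_fg (hπ : Irreducible π) (hD : ∀ f, π • f ∈ D → f ∈ D)
    {N : Submodule O O⟦X⟧} (hN : N.FG) (hND : N ≤ D) :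
    ∃ (n : ℕ) (f : Fin n → O⟦X⟧) (k : Fin n → ℕ), (∀ i, f i ∈ D) ∧
      N ≤ span O (Set.range f) ∧ IsUnit (coeffMatrix f k).det := by
  have : FaithfulSMul O O⟦X⟧ := (faithfulSMul_iff_algebraMap_injective O O⟦X⟧).mpr C_injective
  have : Module.Finite O N := Module.Finite.iff_fg.mpr hN
  let b := Module.finBasis O N
  have hspan : span O (Set.range fun i => (b i : O⟦X⟧)) = N :=
    (span_range_subtype_eq_top_iff N fun i => (b i).2).mp b.span_eq
  have hind : LinearIndependent O fun i m => coeff m (b i : O⟦X⟧) :=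
    (b.linearIndependent.map' N.subtype N.ker_subtype).map' (LinearMap.pi fun m => coeff m)
      (LinearMap.ker_eq_bot.mpr fun F G hFG => ext fun m => congrFun hFG m)
  obtain ⟨k, hk⟩ := Matrix.exists_det_ne_zero_of_linearIndependent _ hind
  obtain ⟨t, ht⟩ := FiniteMultiplicity.of_not_isUnit hπ.not_isUnit hk
  obtain ⟨f, k', hfD, hle, hk'⟩ :=
    exists_isUnit_det_coeffMatrix_of_not_dvd hπ hD (t + 1) (fun i => hND (b i).2) ht
  exact ⟨_, f, k', hfD, hspan.ge.trans hle, hk'⟩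

theorem exists_isUnit_det_coeffMatrix_and_eq_sum_tmul (hπ : Irreducible π) (hD : ∀ f, π • f ∈ D → f ∈ D)
    (R : Type*) [CommRing R] [Algebra O R] (z : R ⊗[O] D) :
    ∃ (n : ℕ) (f : Fin n → O⟦X⟧) (hf : ∀ i, f i ∈ D) (k : Fin n → ℕ) (r : Fin n → R),
      IsUnit (coeffMatrix f k).det ∧ z = ∑ i, r i ⊗ₜ[O] (⟨f i, hf i⟩ : D) := by
  classical
  obtain ⟨s, rfl⟩ := TensorProduct.exists_finset z
  obtain ⟨n, f, k, hfD, hspan, hk⟩ := exists_isUnit_det_coeffMatrix_of_fg hπ hD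
    (fg_span (s.finite_toSet.image fun p : R × D => (p.2 : O⟦X⟧)))
    (span_le.mpr (by rintro _ ⟨p, -, rfl⟩; exact p.2.2))
  let fD : Fin n → D := fun i => ⟨f i, hfD i⟩
  suffices ∑ p ∈ s, p.1 ⊗ₜ[O] p.2 ∈ span R (Set.range fun i => (1 : R) ⊗ₜ[O] fD i) by
    obtain ⟨r, hr⟩ := (mem_span_range_iff_exists_fun R).mp this
    exact ⟨n, f, hfD, k, r, hk, by simp [← hr, fD, smul_tmul']⟩
  refine sum_mem fun p hp => ?_
  obtain ⟨c, hc⟩ := (mem_span_range_iff_exists_fun O).mp (hspan (subset_span ⟨p, hp, rfl⟩))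
  have hp2 : p.2 = ∑ i, c i • fD i := Subtype.ext (by simp [fD, hc])
  rw [hp2, tmul_sum]
  refine sum_mem fun i _ => ?_
  rw [tmul_smul, smul_tmul', ← mul_one (c i • p.1), ← smul_eq_mul, ← smul_tmul']
  exact smul_mem _ _ (subset_span ⟨i, rfl⟩)

end DiscreteValuationRing

end PowerSeries

/-- Let `O` be a discrete valuation ring with uniformiser `π`, `R` a
commutative `O`-algebra, `S` an `O`-submodule of `O[[q]]`, and
`D := {f ∈ O[[q]] : ∃ t ≥ 0, π^t·f ∈ S}` its saturation. Then the natural `R`-linear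
map `D ⊗_O R → R[[q]]` (induced by coefficient-wise base change `O[[q]] → R[[q]]`) is
injective; consequently `D ⊗_O R` is isomorphic, via this map, to the `R`-submodule of
`R[[q]]` generated by the image of `D`. -/
theorem stmt_3 (O : Type*) [CommRing O] [IsDomain O] [IsDiscreteValuationRing O]
    (π : O) (hπ : Irreducible π)
    (R : Type*) [CommRing R] [Algebra O R]
    (S : Submodule O (PowerSeries O))
    (D : Submodule O (PowerSeries O))
    (hD : ∀ f : PowerSeries O, f ∈ D ↔ ∃ t : ℕ, π ^ t • f ∈ S) :
    ∃ g : (R ⊗[O] D) →ₗ[R] PowerSeries R,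
      (∀ (r : R) (f : D),
        g (r ⊗ₜ[O] f) = r • PowerSeries.map (algebraMap O R) (f : PowerSeries O)) ∧
      Function.Injective g ∧
      LinearMap.range g =
        Submodule.span R (PowerSeries.map (algebraMap O R) '' (D : Set (PowerSeries O))) := by
  have hsat : ∀ f, π • f ∈ D → f ∈ D := fun f hf => by
    obtain ⟨t, ht⟩ := (hD _).mp hf
    exact (hD f).mpr ⟨t + 1, by rwa [pow_succ, mul_smul]⟩
  let T : D →ₗ[O] PowerSeries R :=
    (PowerSeries.mapAlgHom (Algebra.ofId O R)).toLinearMap ∘ₗ D.subtype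
  refine ⟨T.liftBaseChange R, fun r f => T.liftBaseChange_tmul R r f, ?_, ?_⟩
  · refine (injective_iff_map_eq_zero _).mpr fun z hz => ?_
    obtain ⟨n, f, hfD, k, r, hk, rfl⟩ := PowerSeries.exists_isUnit_det_coeffMatrix_and_eq_sum_tmul hπ hsat R z
    have hind : LinearIndependent R fun i => PowerSeries.map (algebraMap O R) (f i) :=
      PowerSeries.linearIndependent_of_isUnit_det_coeffMatrix
        (by
          rw [PowerSeries.coeffMatrix_map, ← RingHom.mapMatrix_apply, ← RingHom.map_det]
          exact hk.map _)
    have hr : r = 0 := funext (Fintype.linearIndependent_iff.mp hind r (by simpa [T, PowerSeries.mapAlgHom_apply] using hz))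
    simp [hr]
  · rw [LinearMap.range_liftBaseChange]
    congr 1
    ext
    simp [T, PowerSeries.mapAlgHom_apply]
end

section
/- Let p be a prime, let O be a discrete valuation ring with uniformiser π such that p = u·π^e for some unit u of O and some integer e ≥ 1, and suppose that the canonical ring homomorphism ℤ → O/(π) is surjective (i.e., the residue field of O is 𝔽_p). Set R = O/(π^{e+1}). Then every element of R of the form 1 + p·c with c ∈ R lies in the image of the canonical ring homomorphism ℤ → R; equivalently, since p^2 = 0 in R, every element of 1 + pR lies in the image of the induced ring homomorphism ℤ/p^2ℤ → R. -/
/-!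
Lift `c` to `x ∈ O` and pick an integer `m ≡ x mod π`. Since `π ^ e ∣ p`, the products
`p * x` and `p * m` agree modulo `π ^ (e + 1)`, so `1 + p * c` is the image of `1 + p * m`.
-/

theorem Ideal.Quotient.mk_mul_eq_mk_mul_of_pow_dvd {O : Type*} [CommRing O] {π a x y : O}
    {e : ℕ} (ha : π ^ e ∣ a) (hxy : mk (span {π}) x = mk (span {π}) y) :
    mk (span {π ^ (e + 1)}) (a * x) = mk (span {π ^ (e + 1)}) (a * y) := by
  rw [Ideal.Quotient.eq, mem_span_singleton] at hxy ⊢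
  rw [← mul_sub, pow_succ]
  exact mul_dvd_mul ha hxy

theorem stmt_7_general (p : ℕ) (O : Type*) [CommRing O]
    (π : O)
    (e : ℕ) (u : O) (hpu : (p : O) = u * π ^ e)
    (hres : Function.Surjective (Int.cast : ℤ → O ⧸ Ideal.span {π})) :
    ∀ c : O ⧸ Ideal.span {π ^ (e + 1)},
      ∃ m : ℤ, (m : O ⧸ Ideal.span {π ^ (e + 1)}) =
        1 + (p : O ⧸ Ideal.span {π ^ (e + 1)}) * c := by
  intro c
  obtain ⟨x, rfl⟩ := Ideal.Quotient.mk_surjective c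
  obtain ⟨m, hm⟩ := hres (Ideal.Quotient.mk _ x)
  have hpx : Ideal.Quotient.mk (Ideal.span {π ^ (e + 1)}) (p * m) =
      Ideal.Quotient.mk _ (p * x) :=
    Ideal.Quotient.mk_mul_eq_mk_mul_of_pow_dvd (hpu ▸ dvd_mul_left _ _)
      ((map_intCast _ m).trans hm)
  refine ⟨1 + p * m, ?_⟩
  simpa using hpx

/-- Let `p` be a prime, `O` a discrete valuation ring with uniformiser `π`
such that `p = u·π^e` (`u` a unit, `e ≥ 1`), and with residue field `𝔽_p` (i.e. the
canonical map `ℤ → O/(π)` is surjective). Set `R = O/(π^{e+1})`. Then every element of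
`R` of the form `1 + p·c` lies in the image of the canonical map `ℤ → R`. -/
theorem stmt_7 (p : ℕ) (hp : p.Prime) (O : Type*) [CommRing O] [IsDomain O]
    [IsDiscreteValuationRing O]
    (π : O) (hπ : Irreducible π)
    (e : ℕ) (he : 1 ≤ e) (u : O) (hu : IsUnit u) (hpu : (p : O) = u * π ^ e)
    (hres : Function.Surjective (Int.cast : ℤ → O ⧸ Ideal.span {π})) :
    ∀ c : O ⧸ Ideal.span {π ^ (e + 1)},
      ∃ m : ℤ, (m : O ⧸ Ideal.span {π ^ (e + 1)}) =
        1 + (p : O ⧸ Ideal.span {π ^ (e + 1)}) * c :=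
  stmt_7_general p O π e u hpu hres
end
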